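/- arXiv:2303.07444 — 4 statements merged into one kernel-verified Lean document; each statement's English description precedes it below -/
import Mathlib

section
/- Every graph G on n vertices whose layered tree-independence number is at most k has tree-independence number at most 2·√(k·n). -/
open Classical

/-- A tree decomposition of a graph `G`. -/
structure TreeDecomp {V : Type*} (G : SimpleGraph V) where
  ι : Type
  fin : Fintype ι
  T : SimpleGraph ι
  isTree : T.IsTree
  bag : ι → Set V
  mem_bag : ∀ v : V, ∃ t, v ∈ bag t
  edge_bag : ∀ ⦃u v : V⦄, G.Adj u v → ∃ t, u ∈ bag t ∧ v ∈ bag t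
  bag_connected : ∀ v : V, (T.induce {t | v ∈ bag t}).Connected

/-- `I` is an independent set of `G` contained in `S`, i.e. an independent set of `G[S]`. -/
def IsIndepSetIn {V : Type*} (G : SimpleGraph V) (S : Set V) (I : Finset V) : Prop :=
  ↑I ⊆ S ∧ ∀ u ∈ I, ∀ v ∈ I, u ≠ v → ¬ G.Adj u v

/-- `α(G[S]) ≤ k`. -/
def IndepLE {V : Type*} (G : SimpleGraph V) (S : Set V) (k : ℕ) : Prop :=
  ∀ I : Finset V, IsIndepSetIn G S I → I.card ≤ k

/-- The independence number of the tree decomposition is at most `k`. -/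
def TreeDecomp.IndepNumLE {V : Type*} {G : SimpleGraph V} (td : TreeDecomp G) (k : ℕ) : Prop :=
  ∀ t : td.ι, IndepLE G (td.bag t) k

/-- The tree-independence number of `G` is at most `k`. -/
def treeAlphaLE {V : Type*} (G : SimpleGraph V) (k : ℕ) : Prop :=
  ∃ td : TreeDecomp G, td.IndepNumLE k

/-- The tree-independence number of `G`. -/
noncomputable def treeAlpha {V : Type*} (G : SimpleGraph V) : ℕ :=
  sInf {k | treeAlphaLE G k}

/-- A layering of `G`, encoded by the function sending a vertex to the index of its layer. -/
def IsLayering {V : Type*} (G : SimpleGraph V) (L : V → ℕ) : Prop :=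
  ∀ ⦃u v : V⦄, G.Adj u v → (L u : ℤ) ≤ (L v : ℤ) + 1

/-- The layered tree-independence number of `G` is at most `k`. -/
def layeredTreeAlphaLE {V : Type*} (G : SimpleGraph V) (k : ℕ) : Prop :=
  ∃ (td : TreeDecomp G) (L : V → ℕ), IsLayering G L ∧
    ∀ (t : td.ι) (i : ℕ), IndepLE G (td.bag t ∩ {v | L v = i}) k

/-- The layered tree-independence number of `G`. -/
noncomputable def layeredTreeAlpha {V : Type*} (G : SimpleGraph V) : ℕ :=
  sInf {k | layeredTreeAlphaLE G k}

/-- The number of elements of the multiset `𝒞` containing `v` (with multiplicity). -/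
noncomputable def coverCount {V : Type*} (𝒞 : Multiset (Set V)) (v : V) : ℕ :=
  Multiset.countP (fun C => v ∈ C) 𝒞

/-- `𝒞` is a `β`-general cover: every vertex belongs to at least `β·|𝒞|` elements. -/
def IsGeneralCover {V : Type*} (β : ℝ) (𝒞 : Multiset (Set V)) : Prop :=
  𝒞 ≠ 0 ∧ ∀ v : V, β * (Multiset.card 𝒞 : ℝ) ≤ (coverCount 𝒞 v : ℝ)

/-- The intersection graph of an (indexed) family of sets. -/
def intersectionGraph {ι : Type*} {α : Type*} (D : ι → Set α) : SimpleGraph ι where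
  Adj i j := i ≠ j ∧ (D i ∩ D j).Nonempty
  symm := by
    constructor
    rintro i j ⟨hne, x, hx1, hx2⟩
    exact ⟨hne.symm, x, hx2, hx1⟩
  loopless := by
    constructor
    rintro i ⟨hne, -⟩
    exact hne rfl

/-- The `p`-th power of a graph. -/
def gpower {V : Type*} (G : SimpleGraph V) (p : ℕ) : SimpleGraph V where
  Adj u v := u ≠ v ∧ ∃ w : G.Walk u v, w.length ≤ p
  symm := by
    constructor
    rintro u v ⟨hne, w, hw⟩
    exact ⟨hne.symm, w.reverse, by simpa using hw⟩
  loopless := by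
    constructor
    rintro u ⟨hne, -⟩
    exact hne rfl

/-- The axis-aligned closed hypercube of side length `r` with lower corner `x`. -/
def cube (d : ℕ) (x : EuclideanSpace ℝ (Fin d)) (r : ℝ) : Set (EuclideanSpace ℝ (Fin d)) :=
  {y | ∀ i, x i ≤ y i ∧ y i ≤ x i + r}

/-- The size of an object: the side length of its smallest enclosing axis-aligned hypercube. -/
noncomputable def objSize (d : ℕ) (O : Set (EuclideanSpace ℝ (Fin d))) : ℝ :=
  sInf {r : ℝ | 0 ≤ r ∧ ∃ x, O ⊆ cube d x r}

/-- The collection `O` is `c`-fat. -/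
def IsFat {ι : Type*} (d : ℕ) (c : ℝ) (O : ι → Set (EuclideanSpace ℝ (Fin d))) : Prop :=
  ∀ r : ℝ, 0 < r → ∀ x : EuclideanSpace ℝ (Fin d), ∀ P : Finset ι,
    (∀ i ∈ P, ∀ j ∈ P, i ≠ j → Disjoint (O i) (O j)) →
    (∀ i ∈ P, (O i ∩ cube d x r).Nonempty ∧ r ≤ objSize d (O i)) →
    ∃ pts : Finset (EuclideanSpace ℝ (Fin d)),
      (pts.card : ℝ) ≤ c ∧ ∀ i ∈ P, ∃ p ∈ pts, p ∈ O i

/-- The `n`-dimensional grid graph of width `n`. -/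
def gridGraphN (n : ℕ) : SimpleGraph (Fin n → Fin n) where
  Adj a b := ∑ i, ((a i : ℤ) - (b i : ℤ)).natAbs = 1
  symm := by
    constructor
    intro a b h
    rw [← h]
    exact Finset.sum_congr rfl fun i _ => by omega
  loopless := by
    constructor
    intro a h
    simp at h

/-- The grid graph on `ℤ²`. -/
def latticeGraph : SimpleGraph (ℤ × ℤ) where
  Adj p q := (p.1 - q.1).natAbs + (p.2 - q.2).natAbs = 1
  symm := by
    constructor
    intro p q h
    omega
  loopless := by
    constructor
    intro p h
    simp at h

/-- `P` is (the vertex set of) a path on the integer grid: a finite nonempty subset of `ℤ²`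
whose induced subgraph in the grid graph is a path. -/
def IsGridPath (P : Set (ℤ × ℤ)) : Prop :=
  P.Finite ∧ P.Nonempty ∧ (latticeGraph.induce P).IsTree ∧
    ∀ v : P, ((latticeGraph.induce P).neighborSet v).ncard ≤ 2

/-!
Fix a tree decomposition and a layering witnessing layered tree-independence number `k`, and
`p ≥ 1`. Let `S` be the union of the layers `≡ i (mod p)` for the residue `i` whose layers hold
fewest vertices, so `|S| ≤ n / p`. Deleting `S` leaves bands of `p - 1` consecutive layers with
no edges between different bands. One copy of the decomposition per band, restricted to that
band, with `S` added to every bag and the copies joined into one tree, is a tree decomposition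
whose bags have independence number at most `(p - 1) k + n / p`. For `p = ⌈√(kn) / k⌉` both
terms are at most `√(kn)`.
-/

namespace SimpleGraph

variable {V W : Type*} {G : SimpleGraph V} {H : SimpleGraph W}

lemma not_reachable_of_forall_adj_mem {s : Set V} (hs : ∀ ⦃x y⦄, G.Adj x y → x ∈ s → y ∈ s)
    {u v : V} (hu : u ∈ s) (hv : v ∉ s) : ¬G.Reachable u v := by
  rintro ⟨p⟩
  obtain ⟨d, -, hd, hd'⟩ := p.exists_boundary_dart s hu hv
  exact hd' (hs d.adj hd)

lemma Connected.induce_image (φ : G →g H) {s : Set V} (h : (G.induce s).Connected) :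
    (H.induce (φ '' s)).Connected :=
  h.map (induceHom φ (Set.mapsTo_image φ s)) (Set.surjective_mapsTo_image_restrict φ s)

variable {ι J : Type*}

def starOfCopies (T : SimpleGraph ι) (t₀ : ι) (j₀ : J) : SimpleGraph (ι × J) where
  Adj x y := (x.2 = y.2 ∧ T.Adj x.1 y.1) ∨
    (x.1 = t₀ ∧ y.1 = t₀ ∧ x.2 ≠ y.2 ∧ (x.2 = j₀ ∨ y.2 = j₀))
  symm := ⟨fun _ _ => by
    rintro (⟨h, hT⟩ | ⟨h₁, h₂, h, h'⟩)
    exacts [Or.inl ⟨h.symm, hT.symm⟩, Or.inr ⟨h₂, h₁, Ne.symm h, h'.symm⟩]⟩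
  loopless := ⟨fun _ => by rintro (⟨-, h⟩ | ⟨-, -, h, -⟩); exacts [h.ne rfl, h rfl]⟩

variable {T : SimpleGraph ι} {t₀ : ι} {j₀ : J}

@[simp]
lemma starOfCopies_adj {x y : ι × J} : (starOfCopies T t₀ j₀).Adj x y ↔
    (x.2 = y.2 ∧ T.Adj x.1 y.1) ∨ (x.1 = t₀ ∧ y.1 = t₀ ∧ x.2 ≠ y.2 ∧ (x.2 = j₀ ∨ y.2 = j₀)) :=
  Iff.rfl

def starOfCopies.row (j : J) : T →g starOfCopies T t₀ j₀ :=
  ⟨fun t => (t, j), fun h => starOfCopies_adj.2 (Or.inl ⟨rfl, h⟩)⟩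

lemma starOfCopies_connected (hT : T.Connected) : (starOfCopies T t₀ j₀).Connected := by
  refine (connected_iff_exists_forall_reachable _).2 ⟨(t₀, j₀), fun ⟨t, j⟩ => ?_⟩
  have hrow : (starOfCopies T t₀ j₀).Reachable (t₀, j) (t, j) :=
    (hT.preconnected t₀ t).map (starOfCopies.row j)
  by_cases hj : j = j₀
  · exact hj ▸ hrow
  · refine Reachable.trans (Adj.reachable ?_) hrow
    exact starOfCopies_adj.2 (Or.inr ⟨rfl, rfl, Ne.symm hj, Or.inl rfl⟩)

lemma starOfCopies_isBridge_star {j : J} (hj : j ≠ j₀) :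
    (starOfCopies T t₀ j₀).IsBridge s((t₀, j), (t₀, j₀)) := by
  refine isBridge_iff.2 (not_reachable_of_forall_adj_mem (s := {x : ι × J | x.2 = j}) ?_ rfl
    (Ne.symm hj : j₀ ≠ j))
  rintro ⟨a, i⟩ ⟨b, l⟩ hadj (rfl : i = j)
  obtain ⟨hadj, hne⟩ := deleteEdges_adj.1 hadj
  rcases starOfCopies_adj.1 hadj with ⟨h, -⟩ | ⟨rfl, rfl, -, hi | rfl⟩
  · exact h.symm
  · exact absurd hi hj
  · exact absurd rfl hne

lemma starOfCopies_isBridge_row (hT : T.IsAcyclic) {a b : ι} (hab : T.Adj a b)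
    (ha : ¬(T.deleteEdges {s(a, b)}).Reachable a t₀) (j : J) :
    (starOfCopies T t₀ j₀).IsBridge s((a, j), (b, j)) := by
  have hbridge : ¬(T.deleteEdges {s(a, b)}).Reachable a b :=
    isBridge_iff.1 (isAcyclic_iff_forall_adj_isBridge.1 hT hab)
  refine isBridge_iff.2 (not_reachable_of_forall_adj_mem
    (s := {x | x.2 = j ∧ (T.deleteEdges {s(a, b)}).Reachable a x.1}) ?_ ⟨rfl, .rfl⟩
    fun h => hbridge h.2)
  rintro ⟨x, i⟩ ⟨y, l⟩ hadj ⟨rfl, hx⟩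
  obtain ⟨hadj, hne⟩ := deleteEdges_adj.1 hadj
  rcases starOfCopies_adj.1 hadj with ⟨rfl, hxy⟩ | ⟨rfl, -⟩
  · refine ⟨rfl, hx.trans (Adj.reachable (deleteEdges_adj.2 ⟨hxy, ?_⟩))⟩
    simp only [Set.mem_singleton_iff, Sym2.eq_iff] at hne ⊢
    grind
  · exact absurd hx ha

lemma starOfCopies_isAcyclic (hT : T.IsAcyclic) : (starOfCopies T t₀ j₀).IsAcyclic := by
  refine isAcyclic_iff_forall_adj_isBridge.2 ?_
  rintro ⟨a, i⟩ ⟨b, l⟩ hadj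
  rcases starOfCopies_adj.1 hadj with ⟨rfl, hab⟩ | ⟨rfl, rfl, hil, rfl | rfl⟩
  · by_cases ha : (T.deleteEdges {s(a, b)}).Reachable a t₀
    · have hb : ¬(T.deleteEdges {s(b, a)}).Reachable b t₀ := by
        rw [Sym2.eq_swap]
        exact fun hb => isBridge_iff.1 (isAcyclic_iff_forall_adj_isBridge.1 hT hab)
          (ha.trans hb.symm)
      rw [Sym2.eq_swap]
      exact starOfCopies_isBridge_row hT hab.symm hb i
    · exact starOfCopies_isBridge_row hT hab ha i
  · rw [Sym2.eq_swap]
    exact starOfCopies_isBridge_star (Ne.symm hil)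
  · exact starOfCopies_isBridge_star hil

lemma IsTree.starOfCopies (hT : T.IsTree) : (starOfCopies T t₀ j₀).IsTree :=
  ⟨starOfCopies_connected hT.connected, starOfCopies_isAcyclic hT.isAcyclic⟩

end SimpleGraph

section IndepLE

variable {V : Type*} {G : SimpleGraph V}

lemma IsIndepSetIn.mono {S S' : Set V} {I I' : Finset V} (h : IsIndepSetIn G S I) (hI : I' ⊆ I)
    (hS : (I' : Set V) ⊆ S') : IsIndepSetIn G S' I' :=
  ⟨hS, fun u hu v hv => h.2 u (hI hu) v (hI hv)⟩

lemma IndepLE.mono {S S' : Set V} {k k' : ℕ} (h : IndepLE G S' k) (hS : S ⊆ S') (hk : k ≤ k') :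
    IndepLE G S k' :=
  fun I hI => (h I (hI.mono subset_rfl (hI.1.trans hS))).trans hk

lemma IndepLE.one_le {S : Set V} {k : ℕ} {v : V} (h : IndepLE G S k) (hv : v ∈ S) : 1 ≤ k :=
  h {v} ⟨by simpa using hv, by simp⟩

lemma indepLE_card (S : Finset V) : IndepLE G S S.card :=
  fun _ hI => Finset.card_le_card (Finset.coe_subset.1 hI.1)

lemma indepLE_empty (k : ℕ) : IndepLE G ∅ k := by
  intro I hI
  simp [Finset.coe_eq_empty.1 (Set.subset_empty_iff.1 hI.1)]

lemma IndepLE.union {A B : Set V} {a b : ℕ} (hA : IndepLE G A a) (hB : IndepLE G B b) :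
    IndepLE G (A ∪ B) (a + b) := by
  intro I hI
  rw [← Finset.card_filter_add_card_filter_not (· ∈ A)]
  refine add_le_add (hA _ (hI.mono (Finset.filter_subset _ _) ?_))
    (hB _ (hI.mono (Finset.filter_subset _ _) ?_))
  · intro v hv
    exact (Finset.mem_filter.1 hv).2
  · intro v hv
    obtain ⟨hvI, hvA⟩ := Finset.mem_filter.1 hv
    exact (hI.1 hvI).resolve_left hvA

lemma IndepLE.of_fibers {β : Type*} (g : V → β) (F : Finset β) {X : Set V} {k : ℕ}
    (hX : ∀ v ∈ X, g v ∈ F) (h : ∀ b ∈ F, IndepLE G (X ∩ {v | g v = b}) k) :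
    IndepLE G X (F.card * k) := by
  intro I hI
  rw [Finset.card_eq_sum_card_fiberwise (fun v hv => hX v (hI.1 hv)), ← smul_eq_mul]
  refine Finset.sum_le_card_nsmul _ _ _ fun b hb => h b hb _ (hI.mono (Finset.filter_subset _ _) ?_)
  intro v hv
  obtain ⟨hvI, rfl⟩ := Finset.mem_filter.1 hv
  exact ⟨hI.1 hvI, rfl⟩

lemma indepLE_of_subsingleton_image {β : Type*} (L : V → β) {X Y : Set V} {k : ℕ}
    (h : ∀ ℓ, IndepLE G (X ∩ {v | L v = ℓ}) k) (hYX : Y ⊆ X) (hY : (L '' Y).Subsingleton) :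
    IndepLE G Y k := by
  rcases Y.eq_empty_or_nonempty with rfl | ⟨u, hu⟩
  · exact indepLE_empty k
  · exact (h (L u)).mono (fun v hv => ⟨hYX hv, hY ⟨v, hv, rfl⟩ ⟨u, hu, rfl⟩⟩) le_rfl

end IndepLE

namespace TreeDecomp

variable {V : Type*} {G : SimpleGraph V}

def single (G : SimpleGraph V) : TreeDecomp G where
  ι := Unit
  fin := inferInstance
  T := ⊥
  isTree := .of_subsingleton
  bag _ := Set.univ
  mem_bag _ := ⟨(), Set.mem_univ _⟩
  edge_bag _ _ _ := ⟨(), Set.mem_univ _, Set.mem_univ _⟩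
  bag_connected v := by
    have : Nonempty {t : Unit | v ∈ Set.univ} := ⟨⟨(), Set.mem_univ _⟩⟩
    exact SimpleGraph.IsTree.of_subsingleton.connected

open SimpleGraph in
noncomputable def split (td : TreeDecomp G) (S : Set V) {J : Type} [Fintype J] [Nonempty J]
    (f : V → J) (hf : ∀ ⦃u v⦄, G.Adj u v → u ∉ S → v ∉ S → f u = f v) : TreeDecomp G where
  ι := td.ι × J
  fin := @instFintypeProd _ _ td.fin _
  T := starOfCopies td.T td.isTree.connected.nonempty.some (Classical.arbitrary J)
  isTree := td.isTree.starOfCopies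
  bag x := td.bag x.1 ∩ {v | v ∉ S ∧ f v = x.2} ∪ S
  mem_bag v := by
    by_cases hv : v ∈ S
    · exact ⟨(td.isTree.connected.nonempty.some, f v), Or.inr hv⟩
    · obtain ⟨t, ht⟩ := td.mem_bag v
      exact ⟨(t, f v), Or.inl ⟨ht, hv, rfl⟩⟩
  edge_bag u v huv := by
    obtain ⟨t, hu, hv⟩ := td.edge_bag huv
    by_cases huS : u ∈ S
    · refine ⟨(t, f v), Or.inr huS, ?_⟩
      by_cases hvS : v ∈ S
      exacts [Or.inr hvS, Or.inl ⟨hv, hvS, rfl⟩]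
    · refine ⟨(t, f u), Or.inl ⟨hu, huS, rfl⟩, ?_⟩
      by_cases hvS : v ∈ S
      exacts [Or.inr hvS, Or.inl ⟨hv, hvS, (hf huv huS hvS).symm⟩]
  bag_connected v := by
    by_cases hv : v ∈ S
    · have hset : {x : td.ι × J | v ∈ td.bag x.1 ∩ {v | v ∉ S ∧ f v = x.2} ∪ S} = Set.univ :=
        Set.eq_univ_of_forall fun _ => Or.inr hv
      rw [hset]
      exact (induceUnivIso _).connected_iff.2 (starOfCopies_connected td.isTree.connected)
    · have hset : {x : td.ι × J | v ∈ td.bag x.1 ∩ {v | v ∉ S ∧ f v = x.2} ∪ S} =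
          (fun t => (t, f v)) '' {t | v ∈ td.bag t} := by
        ext ⟨t, j⟩
        simp [hv, eq_comm]
      rw [hset]
      exact (td.bag_connected v).induce_image (starOfCopies.row (f v))

lemma split_bag (td : TreeDecomp G) (S : Set V) {J : Type} [Fintype J] [Nonempty J]
    (f : V → J) (hf : ∀ ⦃u v⦄, G.Adj u v → u ∉ S → v ∉ S → f u = f v) (x : td.ι × J) :
    (td.split S f hf).bag x = td.bag x.1 ∩ {v | v ∉ S ∧ f v = x.2} ∪ S :=
  rfl

end TreeDecomp

/-- The layers `≡ i (mod p)` cut `ℕ` into bands of `p - 1` layers; `band p i ℓ` indexes the band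
of `ℓ`, a layer `≡ i` counting with the band above it. -/
def band (p i ℓ : ℕ) : ℕ := (ℓ + (p - i)) / p

lemma dvd_add_sub_iff_mod_eq {p i a : ℕ} (hi : i < p) : p ∣ a + (p - i) ↔ a % p = i := by
  have hp : i + (p - i) ≡ 0 [MOD p] := by
    rw [Nat.add_sub_cancel' hi.le]
    exact Nat.modEq_zero_iff_dvd.2 dvd_rfl
  calc p ∣ a + (p - i) ↔ a + (p - i) ≡ i + (p - i) [MOD p] := by
        rw [← Nat.modEq_zero_iff_dvd]
        exact ⟨fun h => h.trans hp.symm, fun h => h.trans hp⟩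
    _ ↔ a ≡ i [MOD p] := ⟨Nat.ModEq.add_right_cancel' _, Nat.ModEq.add_right _⟩
    _ ↔ a % p = i := by rw [Nat.ModEq, Nat.mod_eq_of_lt hi]

lemma band_succ {p i ℓ : ℕ} (hi : i < p) (hℓ : (ℓ + 1) % p ≠ i) :
    band p i (ℓ + 1) = band p i ℓ := by
  rw [band, band, add_right_comm]
  exact Nat.succ_div_of_not_dvd fun h =>
    hℓ ((dvd_add_sub_iff_mod_eq hi).1 (by rwa [add_right_comm]))

lemma band_eq_of_adj {p i ℓ ℓ' : ℕ} (hi : i < p) (h : (ℓ : ℤ) ≤ ℓ' + 1) (h' : (ℓ' : ℤ) ≤ ℓ + 1)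
    (hℓ : ℓ % p ≠ i) (hℓ' : ℓ' % p ≠ i) : band p i ℓ = band p i ℓ' := by
  rcases (by omega : ℓ = ℓ' ∨ ℓ' = ℓ + 1 ∨ ℓ = ℓ' + 1) with rfl | rfl | rfl
  · rfl
  · exact (band_succ hi hℓ').symm
  · exact band_succ hi hℓ

lemma eq_of_band_eq_of_mod_eq {p i a b : ℕ} (hab : band p i a = band p i b)
    (hmod : a % p = b % p) : a = b := by
  have hr : (a + (p - i)) % p = (b + (p - i)) % p := by rw [Nat.add_mod, hmod, ← Nat.add_mod]
  have h : a + (p - i) = b + (p - i) := by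
    rw [← Nat.div_add_mod (a + (p - i)) p, ← Nat.div_add_mod (b + (p - i)) p, hr]
    exact congrArg (p * · + _) hab
  omega

section Fintype

variable {V : Type} [Fintype V] {G : SimpleGraph V}

lemma treeAlpha_le_card (G : SimpleGraph V) : treeAlpha G ≤ Fintype.card V :=
  Nat.sInf_le ⟨TreeDecomp.single G, fun _ I _ => Finset.card_le_univ I⟩

lemma layeredTreeAlphaLE_of_layeredTreeAlpha_le {k : ℕ} (h : layeredTreeAlpha G ≤ k) :
    layeredTreeAlphaLE G k := by
  have hne : {k | layeredTreeAlphaLE G k}.Nonempty :=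
    ⟨_, TreeDecomp.single G, fun _ => 0, fun _ _ _ => by simp,
      fun _ _ I _ => Finset.card_le_univ I⟩
  obtain ⟨td, L, hL, hbags⟩ := Nat.sInf_mem hne
  exact ⟨td, L, hL, fun t i => (hbags t i).mono subset_rfl h⟩

/-- Put the layers `≡ i (mod p)` into every bag; what remains of a bag within one band spans
at most `p - 1` layers. -/
theorem treeAlphaLE_of_layering [Nonempty V] {td : TreeDecomp G} {L : V → ℕ}
    (hL : IsLayering G L) {k : ℕ} (hk : ∀ t ℓ, IndepLE G (td.bag t ∩ {v | L v = ℓ}) k)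
    {p i : ℕ} (hi : i < p) :
    treeAlphaLE G ((p - 1) * k + (Finset.univ.filter fun v => L v % p = i).card) := by
  set S : Finset V := Finset.univ.filter fun v => L v % p = i
  have hS : ∀ {v}, v ∈ (S : Set V) ↔ L v % p = i := by simp [S]
  let f := Set.rangeFactorization (band p i ∘ L)
  have hf : ∀ ⦃u v⦄, G.Adj u v → u ∉ (S : Set V) → v ∉ (S : Set V) → f u = f v :=
    fun u v huv hu hv => Subtype.ext <|
      band_eq_of_adj hi (hL huv) (hL huv.symm) (mt hS.2 hu) (mt hS.2 hv)
  refine ⟨td.split S f hf, fun ⟨t, j⟩ => ?_⟩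
  rw [TreeDecomp.split_bag]
  refine IndepLE.union ?_ (indepLE_card S)
  have hcard : ((Finset.range p).erase i).card = p - 1 := by
    rw [Finset.card_erase_of_mem (Finset.mem_range.2 hi), Finset.card_range]
  rw [← hcard]
  refine IndepLE.of_fibers (fun v => L v % p) _ ?_ fun r _ => ?_
  · rintro v ⟨-, hvS, -⟩
    exact Finset.mem_erase.2 ⟨mt hS.2 hvS, Finset.mem_range.2 (Nat.mod_lt _ (by omega))⟩
  · refine indepLE_of_subsingleton_image L (hk t) (fun v hv => hv.1.1) ?_
    rintro _ ⟨u, ⟨⟨-, -, hu⟩, hur⟩, rfl⟩ _ ⟨w, ⟨⟨-, -, hw⟩, hwr⟩, rfl⟩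
    exact eq_of_band_eq_of_mod_eq (congrArg Subtype.val (hu.trans hw.symm))
      (hur.trans hwr.symm)

end Fintype

lemma ceil_sqrt_div_spec {k n : ℝ} (hk : 0 < k) (hn : 0 < n) :
    ((⌈√(k * n) / k⌉₊ : ℝ) - 1) * k ≤ √(k * n) ∧ n / ⌈√(k * n) / k⌉₊ ≤ √(k * n) := by
  set s := √(k * n)
  have hs : 0 < s := Real.sqrt_pos.2 (mul_pos hk hn)
  have hss : s * s = k * n := Real.mul_self_sqrt (mul_pos hk hn).le
  have hp : s / k ≤ ⌈s / k⌉₊ := Nat.le_ceil _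
  have hp' : (⌈s / k⌉₊ : ℝ) < s / k + 1 := Nat.ceil_lt_add_one (by positivity)
  constructor
  · calc ((⌈s / k⌉₊ : ℝ) - 1) * k ≤ s / k * k := by gcongr; linarith
      _ = s := div_mul_cancel₀ s hk.ne'
  · calc n / ⌈s / k⌉₊ ≤ n / (s / k) := by gcongr
      _ = s := by field_simp; linarith

/-- Every graph `G` on `n` vertices whose layered tree-independence number is at
most `k` has tree-independence number at most `2·√(k·n)`. -/
theorem stmt0 {V : Type} [Fintype V] (G : SimpleGraph V) (k : ℕ)
    (h : layeredTreeAlpha G ≤ k) :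
    (treeAlpha G : ℝ) ≤ 2 * Real.sqrt ((k : ℝ) * (Fintype.card V : ℝ)) := by
  obtain ⟨td, L, hL, hk⟩ := layeredTreeAlphaLE_of_layeredTreeAlpha_le h
  rcases isEmpty_or_nonempty V with hV | hV
  · have h0 : treeAlpha G = 0 := Nat.le_zero.1 (Fintype.card_eq_zero (α := V) ▸ treeAlpha_le_card G)
    rw [h0, Nat.cast_zero]
    positivity
  have ⟨v⟩ := hV
  obtain ⟨t, hvt⟩ := td.mem_bag v
  have hk1 : (0 : ℝ) < k := by exact_mod_cast (hk t (L v)).one_le ⟨hvt, rfl⟩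
  have hn : (0 : ℝ) < Fintype.card V := by exact_mod_cast Fintype.card_pos
  obtain ⟨hband, hsep⟩ := ceil_sqrt_div_spec hk1 hn
  set p := ⌈√(k * Fintype.card V : ℝ) / k⌉₊
  have hp : 0 < p := Nat.ceil_pos.2 (by positivity)
  have : NeZero p := ⟨hp.ne'⟩
  obtain ⟨i, hi⟩ := Fintype.exists_card_fiber_le_of_card_le_nsmul
    (fun v => (⟨L v % p, Nat.mod_lt _ hp⟩ : Fin p)) (b := (Fintype.card V : ℝ) / p)
    (by rw [Fintype.card_fin, nsmul_eq_mul, mul_div_cancel₀ _ (by positivity)])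
  simp only [Fin.ext_iff] at hi
  calc (treeAlpha G : ℝ)
      ≤ ((p - 1) * k + (Finset.univ.filter fun v => L v % p = i).card : ℕ) :=
        Nat.cast_le.2 (Nat.sInf_le (treeAlphaLE_of_layering hL hk i.isLt))
    _ ≤ √(k * Fintype.card V : ℝ) + √(k * Fintype.card V : ℝ) := by
        push_cast [Nat.cast_sub hp]
        gcongr
        exact hi.trans hsep
    _ = 2 * √(k * Fintype.card V : ℝ) := by ring
end

section
/- For every n ≥ 1, the layered tree-independence number of the complete bipartite graph K_{n,n} is at least n/5. -/
open Classical

/-!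
Every tree decomposition of `K_{α,β}` has a bag containing a whole side. Otherwise each node `t`
misses some left vertex `a`; the subtree of `a` then lies in one branch of `T - t`, so `t` points
to a neighbour. Some edge `t t'` is pointed along in both directions, so each right vertex is
adjacent to left vertices whose subtrees lie on both sides of that edge, hence lies in the bag of
`t`; but `t` also misses a right vertex.

A whole side is independent and every vertex of it is adjacent to a fixed vertex `v` of the other
side, so it lies in the three layers around `v`. Hence `n ≤ 3 ℓ`, which is stronger than
`n / 5 ≤ ℓ`.
-/

namespace SimpleGraph

variable {ι : Type*} {T : SimpleGraph ι} {t t' t'' x y z : ι}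

/-- The vertices reachable from `t'` without passing through `t`; for adjacent `t, t'` in a tree,
the component of `T - t` containing `t'`. -/
def branch (T : SimpleGraph ι) (t t' : ι) : Set ι :=
  {z | ∃ w : T.Walk t' z, t ∉ w.support}

lemma right_mem_branch (h : T.Adj t t') : t' ∈ T.branch t t' :=
  ⟨Walk.nil, by simpa using h.ne⟩

lemma left_notMem_branch : t ∉ T.branch t t' :=
  fun ⟨w, hw⟩ => hw w.end_mem_support

lemma exists_walk_support_subset_of_connected_induce {S : Set ι} (hS : (T.induce S).Connected)
    (hx : x ∈ S) (hy : y ∈ S) : ∃ w : T.Walk x y, ∀ z ∈ w.support, z ∈ S := by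
  obtain ⟨w⟩ := hS.preconnected ⟨x, hx⟩ ⟨y, hy⟩
  refine ⟨w.map (⟨Subtype.val, id⟩ : T.induce S →g T), fun z hz => ?_⟩
  rw [Walk.support_map, List.mem_map] at hz
  obtain ⟨⟨z, hzS⟩, -, rfl⟩ := hz
  exact hzS

namespace IsTree

variable (hT : T.IsTree)
include hT

lemma mem_support_of_mem_branch (h : T.Adj t t') (hz : z ∈ T.branch t t') (w : T.Walk t z) :
    t' ∈ w.support := by
  obtain ⟨w', hw'⟩ := hz
  have hpath : (Walk.cons h w'.bypass).IsPath :=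
    w'.bypass_isPath.cons fun ht => hw' (w'.support_bypass_subset_support ht)
  have heq : Walk.cons h w'.bypass = w.bypass :=
    (hT.existsUnique_path t z).unique hpath w.bypass_isPath
  apply w.support_bypass_subset_support
  rw [← heq, Walk.support_cons]
  exact List.mem_cons_of_mem _ w'.bypass.start_mem_support

lemma mem_support_of_mem_branch_of_mem_branch (h : T.Adj t t') (hx : x ∈ T.branch t t')
    (hy : y ∈ T.branch t' t) (w : T.Walk x y) : t ∈ w.support := by
  obtain ⟨wx, hwx⟩ := hx
  have := hT.mem_support_of_mem_branch h.symm hy (wx.append w)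
  rw [Walk.mem_support_append_iff] at this
  exact this.resolve_left hwx

lemma branch_subset_branch (h : T.Adj t t') (h' : T.Adj t' t'') (hne : t'' ≠ t) :
    T.branch t' t'' ⊆ T.branch t t' := by
  rintro z ⟨w, hw⟩
  have htw : t ∉ w.support := fun ht => by
    have hbranch : t ∈ T.branch t' t'' :=
      ⟨w.takeUntil t ht, fun h'' => hw (w.support_takeUntil_subset_support _ h'')⟩
    have := hT.mem_support_of_mem_branch h' hbranch (Walk.cons h.symm Walk.nil)
    simp only [Walk.support_cons, Walk.support_nil, List.mem_cons, List.not_mem_nil,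
      or_false] at this
    exact this.elim h'.ne.symm hne
  refine ⟨Walk.cons h' w, ?_⟩
  rw [Walk.support_cons, List.mem_cons, not_or]
  exact ⟨h.ne, htw⟩

lemma exists_adj_subset_branch {S : Set ι} (hS : (T.induce S).Connected) (ht : t ∉ S) :
    ∃ t', T.Adj t t' ∧ S ⊆ T.branch t t' := by
  obtain ⟨⟨s, hs⟩⟩ := hS.nonempty
  obtain ⟨w⟩ := hT.connected.preconnected t s
  obtain ⟨t', h, q, hq⟩ := Walk.not_nil_iff.mp
    (Walk.not_nil_of_ne (p := w.bypass) fun hts => ht (hts ▸ hs))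
  have hpath : (Walk.cons h q).IsPath := hq ▸ w.bypass_isPath
  refine ⟨t', h, fun z hz => ?_⟩
  obtain ⟨w', hw'⟩ := exists_walk_support_subset_of_connected_induce hS hs hz
  refine ⟨q.append w', ?_⟩
  rw [Walk.mem_support_append_iff, not_or]
  exact ⟨(Walk.cons_isPath_iff h q).mp hpath |>.2, fun ht' => ht (hw' t ht')⟩

/-- Choose a pointing edge `t → t'` with smallest branch: `t'` must point back. -/
lemma exists_adj_of_forall_exists_adj [Finite ι] (Q : ι → ι → Prop)
    (hQ : ∀ t, ∃ t', T.Adj t t' ∧ Q t t') : ∃ t t', T.Adj t t' ∧ Q t t' ∧ Q t' t := by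
  obtain ⟨t₀⟩ := hT.connected.nonempty
  obtain ⟨t₀', h₀, hQ₀⟩ := hQ t₀
  obtain ⟨⟨t, t'⟩, ⟨h, hQtt'⟩, hmin⟩ :=
    (measure fun p : ι × ι => (T.branch p.1 p.2).ncard).wf.has_min
      {p | T.Adj p.1 p.2 ∧ Q p.1 p.2} ⟨(t₀, t₀'), h₀, hQ₀⟩
  obtain ⟨t'', h', hQt't''⟩ := hQ t'
  refine ⟨t, t', h, hQtt', ?_⟩
  by_contra hne
  have ht'' : t'' ≠ t := by
    rintro rfl
    exact hne hQt't''
  have hlt : (T.branch t' t'').ncard < (T.branch t t').ncard :=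
    Set.ncard_lt_ncard ((Set.ssubset_iff_of_subset (hT.branch_subset_branch h h' ht'')).mpr
      ⟨t', right_mem_branch h, left_notMem_branch⟩)
  exact hmin (t', t'') ⟨h', hQt't''⟩ hlt

end IsTree

end SimpleGraph

open SimpleGraph

namespace TreeDecomp

variable {V : Type*} {G : SimpleGraph V} (td : TreeDecomp G)

lemma exists_adj_subset_branch {v : V} {t : td.ι} (hv : v ∉ td.bag t) :
    ∃ t', td.T.Adj t t' ∧ {s | v ∈ td.bag s} ⊆ td.T.branch t t' :=
  td.isTree.exists_adj_subset_branch (td.bag_connected v) hv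

lemma mem_bag_of_adj_of_subset_branch {u v w : V} {t t' : td.ι} (h : td.T.Adj t t')
    (hu : {s | u ∈ td.bag s} ⊆ td.T.branch t t')
    (hw : {s | w ∈ td.bag s} ⊆ td.T.branch t' t)
    (hvu : G.Adj v u) (hvw : G.Adj v w) : v ∈ td.bag t := by
  obtain ⟨s, hvs, hus⟩ := td.edge_bag hvu
  obtain ⟨s', hvs', hws'⟩ := td.edge_bag hvw
  obtain ⟨p, hp⟩ :=
    exists_walk_support_subset_of_connected_induce (td.bag_connected v) hvs hvs'
  exact hp t (td.isTree.mem_support_of_mem_branch_of_mem_branch h (hu hus) (hw hws') p)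

lemma exists_bag_side {α β : Type*} (td : TreeDecomp (completeBipartiteGraph α β)) :
    ∃ t, (∀ a, Sum.inl a ∈ td.bag t) ∨ (∀ b, Sum.inr b ∈ td.bag t) := by
  by_contra! hmiss
  have := td.fin
  obtain ⟨t, t', h, ⟨a, ha⟩, ⟨a', ha'⟩⟩ := td.isTree.exists_adj_of_forall_exists_adj
    (fun t t' => ∃ a, {s | Sum.inl a ∈ td.bag s} ⊆ td.T.branch t t') fun t => by
      obtain ⟨⟨a, ha⟩, -⟩ := hmiss t
      obtain ⟨t', h, hsub⟩ := td.exists_adj_subset_branch ha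
      exact ⟨t', h, a, hsub⟩
  obtain ⟨-, b, hb⟩ := hmiss t
  exact hb (td.mem_bag_of_adj_of_subset_branch h ha ha' (by simp) (by simp))

def trivial (G : SimpleGraph V) : TreeDecomp G where
  ι := Unit
  fin := inferInstance
  T := ⊥
  isTree := .of_subsingleton
  bag _ := Set.univ
  mem_bag _ := ⟨(), Set.mem_univ _⟩
  edge_bag _ _ _ := ⟨(), Set.mem_univ _, Set.mem_univ _⟩
  bag_connected _ := (IsTree.of_subsingleton (V := (Set.univ : Set Unit))).connected

end TreeDecomp

lemma IsIndepSetIn.subset {V : Type*} {G : SimpleGraph V} {S S' : Set V} {I J : Finset V}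
    (hI : IsIndepSetIn G S I) (hJI : J ⊆ I) (hJS : ↑J ⊆ S') : IsIndepSetIn G S' J :=
  ⟨hJS, fun u hu v hv => hI.2 u (hJI hu) v (hJI hv)⟩

/-- The vertices of `I` lie in the three layers around `v`. -/
lemma IsLayering.card_le_of_forall_adj {V : Type*} {G : SimpleGraph V} {L : V → ℕ}
    (hL : IsLayering G L) {B : Set V} {k : ℕ} (hB : ∀ i, IndepLE G (B ∩ {v | L v = i}) k)
    {I : Finset V} (hI : IsIndepSetIn G B I) {v : V} (hv : ∀ u ∈ I, G.Adj u v) :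
    I.card ≤ 3 * k := by
  have hlayer : ∀ u ∈ I, L u ∈ ({L v - 1, L v, L v + 1} : Finset ℕ) := fun u hu => by
    have := hL (hv u hu)
    have := hL (hv u hu).symm
    simp only [Finset.mem_insert, Finset.mem_singleton]
    omega
  calc I.card ≤ k * ({L v - 1, L v, L v + 1} : Finset ℕ).card :=
        Finset.card_le_mul_card_image_of_maps_to hlayer k fun i _ =>
          hB i _ (hI.subset (Finset.filter_subset _ _) fun u hu => by
            rw [Finset.coe_filter] at hu
            exact ⟨hI.1 hu.1, hu.2⟩)
    _ ≤ 3 * k := by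
        rw [mul_comm]
        exact Nat.mul_le_mul_right k Finset.card_le_three

lemma layeredTreeAlphaLE_card {V : Type*} [Fintype V] (G : SimpleGraph V) :
    layeredTreeAlphaLE G (Fintype.card V) :=
  ⟨.trivial G, fun _ => 0, fun _ _ _ => by simp, fun _ _ I _ => I.card_le_univ⟩

lemma layeredTreeAlphaLE.min_card_le {α β : Type*} [Fintype α] [Fintype β] {k : ℕ}
    (h : layeredTreeAlphaLE (completeBipartiteGraph α β) k) :
    min (Fintype.card α) (Fintype.card β) ≤ 3 * k := by
  obtain ⟨td, L, hL, hk⟩ := h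
  obtain ⟨t, hα | hβ⟩ := td.exists_bag_side
  · cases isEmpty_or_nonempty β
    · simp [Fintype.card_eq_zero]
    obtain ⟨b⟩ := ‹Nonempty β›
    refine min_le_of_left_le ?_
    have := hL.card_le_of_forall_adj (hk t) (I := Finset.univ.map .inl) (v := .inr b)
      ⟨by simpa [Set.subset_def] using hα, by simp⟩ (by simp)
    simpa using this
  · cases isEmpty_or_nonempty α
    · simp [Fintype.card_eq_zero]
    obtain ⟨a⟩ := ‹Nonempty α›
    refine min_le_of_right_le ?_
    have := hL.card_le_of_forall_adj (hk t) (I := Finset.univ.map .inr) (v := .inl a)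
      ⟨by simpa [Set.subset_def] using hβ, by simp⟩ (by simp)
    simpa using this

theorem stmt2_general (n : ℕ) :
    (n : ℝ) / 5 ≤ (layeredTreeAlpha (completeBipartiteGraph (Fin n) (Fin n)) : ℝ) := by
  have hk : layeredTreeAlphaLE (completeBipartiteGraph (Fin n) (Fin n))
      (layeredTreeAlpha (completeBipartiteGraph (Fin n) (Fin n))) :=
    Nat.sInf_mem (s := {k | layeredTreeAlphaLE (completeBipartiteGraph (Fin n) (Fin n)) k})
      ⟨_, layeredTreeAlphaLE_card _⟩
  have h3 : n ≤ 3 * layeredTreeAlpha (completeBipartiteGraph (Fin n) (Fin n)) := by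
    simpa using hk.min_card_le
  have h3' : (n : ℝ) ≤ 3 * layeredTreeAlpha (completeBipartiteGraph (Fin n) (Fin n)) := by
    exact_mod_cast h3
  linarith [n.cast_nonneg (α := ℝ)]

/-- For every `n ≥ 1`, the layered tree-independence number of `K_{n,n}` is at
least `n/5`. -/
theorem stmt2 (n : ℕ) (hn : 1 ≤ n) :
    (n : ℝ) / 5 ≤ (layeredTreeAlpha (completeBipartiteGraph (Fin n) (Fin n)) : ℝ) :=
  stmt2_general n
end

section
/- Let d ≥ 2 and let 𝒪 be a finite collection of bounded measurable subsets of ℝ^d, each of positive size, and let r₀ = min_{O∈𝒪} s(O). Suppose there exists a real number a with 0 < a ≤ 1 such that for every O ∈ 𝒪, every point x ∈ O, and every r with r₀ ≤ r ≤ s(O), the Lebesgue measure of {y ∈ O : dist(y, x) ≤ r} is at least a·r^d. Then 𝒪 is (3^d/a)-fat; in particular, for every r > 0 and every axis-aligned closed hypercube R of side length r, any subcollection of pairwise disjoint members of 𝒪, each of size at least r and each intersecting R, has at most 3^d/a members. -/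
open Classical

/-!
Let `ρ = max r r₀`. Every member of the subcollection contains a point `z` of the cube `R`, and
since `r₀ ≤ ρ ≤ s(O)` the part of the member within distance `ρ` of `z` has volume at least
`a ρ^d`. These parts are pairwise disjoint and all lie in the cube of side `r + 2ρ ≤ 3ρ` obtained
by enlarging `R` by `ρ` on every side, so their number is at most `(3ρ)^d / (a ρ^d) = 3^d / a`.
Choosing one point in each member then witnesses `(3^d/a)`-fatness.
-/

open MeasureTheory

lemma volume_cube (d : ℕ) (x : EuclideanSpace ℝ (Fin d)) {s : ℝ} (hs : 0 ≤ s) :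
    volume (cube d x s) = ENNReal.ofReal (s ^ d) := by
  have h : cube d x s = (MeasurableEquiv.toLp 2 (Fin d → ℝ)).symm ⁻¹'
      Set.univ.pi fun j => Set.Icc (x j) (x j + s) := by
    ext y
    simp [cube, MeasurableEquiv.coe_toLp_symm, Pi.le_def, forall_and]
  rw [h, (EuclideanSpace.volume_preserving_symm_measurableEquiv_toLp (Fin d)).measure_preimage
    (MeasurableSet.univ_pi fun _ => measurableSet_Icc).nullMeasurableSet, volume_pi_pi]
  simp [Real.volume_Icc, ENNReal.ofReal_pow hs]

lemma closedBall_subset_cube {d : ℕ} {x z : EuclideanSpace ℝ (Fin d)} {r : ℝ}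
    (hz : z ∈ cube d x r) (ρ : ℝ) :
    Metric.closedBall z ρ ⊆ cube d (WithLp.toLp 2 fun j => x j - ρ) (r + 2 * ρ) := by
  intro y hy j
  have hyz : |y j - z j| ≤ ρ := (PiLp.dist_apply_le y z j).trans hy
  obtain ⟨hlo, hhi⟩ := abs_le.mp hyz
  obtain ⟨hzlo, hzhi⟩ := hz j
  constructor <;> linarith

lemma card_mul_le_measure_of_pairwiseDisjoint {α ι : Type*} [MeasurableSpace α]
    {μ : Measure α} {P : Finset ι} {t : ι → Set α} {T : Set α} {m : ENNReal}
    (hmeas : ∀ i ∈ P, MeasurableSet (t i)) (hdisj : (P : Set ι).PairwiseDisjoint t)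
    (hsub : ∀ i ∈ P, t i ⊆ T) (hm : ∀ i ∈ P, m ≤ μ (t i)) :
    P.card * m ≤ μ T :=
  calc (P.card : ENNReal) * m = ∑ _i ∈ P, m := by rw [Finset.sum_const, nsmul_eq_mul]
    _ ≤ ∑ i ∈ P, μ (t i) := Finset.sum_le_sum hm
    _ = μ (⋃ i ∈ P, t i) := (measure_biUnion_finset hdisj hmeas).symm
    _ ≤ μ T := measure_mono (Set.iUnion₂_subset hsub)

theorem card_le_of_pairwiseDisjoint_of_meets_cube {ι : Type*} {d : ℕ}
    {O : ι → Set (EuclideanSpace ℝ (Fin d))} (hmeas : ∀ i, MeasurableSet (O i))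
    {r₀ a : ℝ} (ha : 0 < a) (hr₀ : ∀ i, r₀ ≤ objSize d (O i))
    (hvol : ∀ i, ∀ x ∈ O i, ∀ r : ℝ, r₀ ≤ r → r ≤ objSize d (O i) →
      ENNReal.ofReal (a * r ^ d) ≤ volume {y ∈ O i | dist y x ≤ r})
    {r : ℝ} (hr : 0 < r) (x : EuclideanSpace ℝ (Fin d)) {P : Finset ι}
    (hdisj : (P : Set ι).PairwiseDisjoint O)
    (hP : ∀ i ∈ P, (O i ∩ cube d x r).Nonempty ∧ r ≤ objSize d (O i)) :
    (P.card : ℝ) ≤ 3 ^ d / a := by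
  set ρ := max r r₀
  have hρ : 0 < ρ := hr.trans_le (le_max_left _ _)
  choose! z hz using fun i hi => (hP i hi).1
  have hpack : (P.card : ENNReal) * ENNReal.ofReal (a * ρ ^ d) ≤
      volume (cube d (WithLp.toLp 2 fun j => x j - ρ) (r + 2 * ρ)) := by
    refine card_mul_le_measure_of_pairwiseDisjoint (t := fun i => O i ∩ Metric.closedBall (z i) ρ)
      (fun i _ => (hmeas i).inter measurableSet_closedBall)
      (hdisj.mono fun _ => Set.inter_subset_left)
      (fun i hi => Set.inter_subset_right.trans (closedBall_subset_cube (hz i hi).2 ρ))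
      fun i hi => hvol i (z i) (hz i hi).1 ρ (le_max_right _ _) (max_le (hP i hi).2 (hr₀ i))
  have hside : r + 2 * ρ ≤ 3 * ρ := by linarith [le_max_left r r₀]
  rw [volume_cube _ _ (by positivity), ← ENNReal.ofReal_natCast,
    ← ENNReal.ofReal_mul (by positivity), ENNReal.ofReal_le_ofReal_iff (by positivity)] at hpack
  have hcount : P.card * a * ρ ^ d ≤ 3 ^ d * ρ ^ d :=
    calc P.card * a * ρ ^ d = P.card * (a * ρ ^ d) := mul_assoc _ _ _
      _ ≤ (r + 2 * ρ) ^ d := hpack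
      _ ≤ (3 * ρ) ^ d := pow_le_pow_left₀ (by positivity) hside d
      _ = 3 ^ d * ρ ^ d := mul_pow _ _ _
  rw [le_div_iff₀ ha]
  exact le_of_mul_le_mul_right hcount (by positivity)

lemma isFat_of_card_le {ι : Type*} {d : ℕ} {c : ℝ} {O : ι → Set (EuclideanSpace ℝ (Fin d))}
    (h : ∀ r : ℝ, 0 < r → ∀ x : EuclideanSpace ℝ (Fin d), ∀ P : Finset ι,
      (∀ i ∈ P, ∀ j ∈ P, i ≠ j → Disjoint (O i) (O j)) →
      (∀ i ∈ P, (O i ∩ cube d x r).Nonempty ∧ r ≤ objSize d (O i)) → (P.card : ℝ) ≤ c) :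
    IsFat d c O := by
  intro r hr x P hdisj hP
  choose! z hz using fun i hi => (hP i hi).1
  refine ⟨P.image z, ?_, fun i hi => ⟨z i, Finset.mem_image_of_mem z hi, (hz i hi).1⟩⟩
  exact (Nat.cast_le.mpr Finset.card_image_le).trans (h r hr x P hdisj hP)

theorem stmt10_general {ι : Type} (d : ℕ)
    (O : ι → Set (EuclideanSpace ℝ (Fin d)))
    (hmeas : ∀ i, MeasurableSet (O i))
    (r₀ : ℝ) (hr₀ : IsLeast (Set.range fun i => objSize d (O i)) r₀)
    (a : ℝ) (ha0 : 0 < a)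
    (hvol : ∀ i, ∀ x ∈ O i, ∀ r : ℝ, r₀ ≤ r → r ≤ objSize d (O i) →
      ENNReal.ofReal (a * r ^ d) ≤ MeasureTheory.volume {y ∈ O i | dist y x ≤ r}) :
    IsFat d ((3 : ℝ) ^ d / a) O ∧
    ∀ r : ℝ, 0 < r → ∀ x : EuclideanSpace ℝ (Fin d), ∀ P : Finset ι,
      (∀ i ∈ P, ∀ j ∈ P, i ≠ j → Disjoint (O i) (O j)) →
      (∀ i ∈ P, (O i ∩ cube d x r).Nonempty ∧ r ≤ objSize d (O i)) →
      (P.card : ℝ) ≤ (3 : ℝ) ^ d / a := by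
  refine ⟨isFat_of_card_le ?card, ?card⟩
  intro r hr x P hdisj hP
  exact card_le_of_pairwiseDisjoint_of_meets_cube hmeas ha0 (fun i => hr₀.2 ⟨i, rfl⟩) hvol hr x
    (fun i hi j hj hij => hdisj i hi j hj hij) hP

/-- if every object, every point `x` in it and every `r₀ ≤ r ≤ s(O)` satisfy
`vol {y ∈ O : dist y x ≤ r} ≥ a·r^d`, then the collection is `(3^d/a)`-fat; in particular any
pairwise disjoint subcollection of objects of size at least `r` meeting a size-`r` hypercube
has at most `3^d/a` members. -/
theorem stmt10 {ι : Type} [Fintype ι] [Nonempty ι] (d : ℕ) (hd : 2 ≤ d)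
    (O : ι → Set (EuclideanSpace ℝ (Fin d)))
    (hbnd : ∀ i, Bornology.IsBounded (O i))
    (hmeas : ∀ i, MeasurableSet (O i))
    (hpos : ∀ i, 0 < objSize d (O i))
    (r₀ : ℝ) (hr₀ : IsLeast (Set.range fun i => objSize d (O i)) r₀)
    (a : ℝ) (ha0 : 0 < a) (ha1 : a ≤ 1)
    (hvol : ∀ i, ∀ x ∈ O i, ∀ r : ℝ, r₀ ≤ r → r ≤ objSize d (O i) →
      ENNReal.ofReal (a * r ^ d) ≤ MeasureTheory.volume {y ∈ O i | dist y x ≤ r}) :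
    IsFat d ((3 : ℝ) ^ d / a) O ∧
    ∀ r : ℝ, 0 < r → ∀ x : EuclideanSpace ℝ (Fin d), ∀ P : Finset ι,
      (∀ i ∈ P, ∀ j ∈ P, i ≠ j → Disjoint (O i) (O j)) →
      (∀ i ∈ P, (O i ∩ cube d x r).Nonempty ∧ r ≤ objSize d (O i)) →
      (P.card : ℝ) ≤ (3 : ℝ) ^ d / a :=
  stmt10_general d O hmeas r₀ hr₀ a ha0 hvol
end

section
/- Let ℓ ≥ 1 be an integer and let ℛ be a finite family of nondegenerate axis-aligned closed rectangles in ℝ², each of the form [a, b] × [c, d] with integers a < b and c < d and with 1 ≤ a and b ≤ ℓ (so all x-coordinates of vertices lie among ℓ consecutive grid columns). Then the intersection graph G of ℛ has a tree decomposition 𝒯 with independence number α(𝒯) ≤ ⌊ℓ/2⌋; in particular, tree-α(G) ≤ ⌊ℓ/2⌋. -/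
open Classical

/-!
The rectangles meeting a horizontal line `y = const` form the bags of a path decomposition: a
rectangle lies in the bags of the integer lines between its bottom and top edge, and two
intersecting rectangles share such a line. Two rectangles crossing the same horizontal line
intersect exactly when their `x`-projections do, so an independent set in a bag gives pairwise
disjoint integer intervals `[a, b] ⊆ [1, ℓ]`, each with at least two integer points; there are
at most `⌊ℓ/2⌋` of them.
-/

namespace SimpleGraph

variable {α : Type*} [LinearOrder α]

theorem isAcyclic_hasse : (hasse α).IsAcyclic := by
  refine isAcyclic_iff_forall_adj_isBridge.mpr ?_
  suffices h : ∀ ⦃a b : α⦄, a ⋖ b → (hasse α).IsBridge s(a, b) by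
    intro a b hab
    rcases hasse_adj.mp hab with hab | hba
    · exact h hab
    · exact Sym2.eq_swap ▸ h hba
  intro a b hab hreach
  -- without the edge `ab`, no edge leaves the down-set of `a`
  have closed : ∀ ⦃x y⦄, ((hasse α).deleteEdges {s(a, b)}).Adj x y → x ≤ a → y ≤ a := by
    intro x y hxy hxa
    rw [deleteEdges_adj, hasse_adj, Set.mem_singleton_iff] at hxy
    obtain ⟨hxy | hyx, hne⟩ := hxy
    · by_contra! hay
      obtain rfl : x = a := le_antisymm hxa (hxy.le_of_lt hay)
      exact hne (by rw [hab.unique_right hxy])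
    · exact hyx.lt.le.trans hxa
  have hb : b ≤ a := hreach.mem_subgraphVerts (H := (⊤ : Subgraph _).induce {x | x ≤ a})
    (fun x hx y hxy => ⟨hx, closed hxy hx, hxy⟩) le_rfl
  exact hb.not_gt hab.lt

theorem connected_induce_hasse [SuccOrder α] [IsSuccArchimedean α] {s : Set α}
    (hs : s.OrdConnected) (hne : s.Nonempty) : ((hasse α).induce s).Connected := by
  have : Nonempty s := hne.to_subtype
  suffices h : ∀ a b : s, a ≤ b → ((hasse α).induce s).Reachable a b from
    ⟨fun a b => (le_total a b).elim (h a b) fun hba => (h b a hba).symm⟩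
  rintro ⟨a, ha⟩ ⟨b, hb⟩ (hab : a ≤ b)
  revert hb
  refine Succ.rec (fun _ => .rfl) (fun n han ih => ?_) hab
  by_cases hmax : IsMax n
  · rw [hmax.succ_eq]
    exact ih
  · intro hn
    have hn' : n ∈ s := hs.out ha hn ⟨han, (Order.lt_succ_of_not_isMax hmax).le⟩
    have hadj : ((hasse α).induce s).Adj ⟨n, hn'⟩ ⟨_, hn⟩ :=
      hasse_adj.mpr (.inl (Order.covBy_succ_of_not_isMax hmax))
    exact (ih hn').trans hadj.reachable

theorem pathGraph_isTree (n : ℕ) : (pathGraph (n + 1)).IsTree :=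
  ⟨pathGraph_connected n, isAcyclic_hasse⟩

end SimpleGraph

open SimpleGraph

theorem exists_treeDecomp_of_intervals {V : Type*} [Finite V] (G : SimpleGraph V)
    (lo hi : V → ℤ) (hle : ∀ v, lo v ≤ hi v) (hadj : ∀ ⦃u v⦄, G.Adj u v → lo u ≤ hi v) :
    ∃ td : TreeDecomp G, ∀ t, ∃ y : ℤ, td.bag t = {v | lo v ≤ y ∧ y ≤ hi v} := by
  obtain ⟨m, hm⟩ := (Set.finite_range lo).bddBelow
  obtain ⟨M, hM⟩ := (Set.finite_range hi).bddAbove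
  let y : Fin ((M - m).toNat + 1) → ℤ := fun t => m + t
  have y_surj : ∀ z, m ≤ z → z ≤ M → ∃ t, y t = z := fun z hmz hzM =>
    ⟨⟨(z - m).toNat, by omega⟩, by simp only [y]; omega⟩
  have mem_bag : ∀ v, ∃ t, lo v ≤ y t ∧ y t ≤ hi v := fun v => by
    obtain ⟨t, ht⟩ := y_surj (lo v) (hm ⟨v, rfl⟩) ((hle v).trans (hM ⟨v, rfl⟩))
    exact ⟨t, ht.ge, ht ▸ hle v⟩
  refine ⟨{ ι := Fin ((M - m).toNat + 1)
            fin := inferInstance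
            T := pathGraph _
            isTree := pathGraph_isTree _
            bag := fun t => {v | lo v ≤ y t ∧ y t ≤ hi v}
            mem_bag := mem_bag
            edge_bag := fun u v huv => ?_
            bag_connected := fun v => ?_ }, fun t => ⟨y t, rfl⟩⟩
  · obtain ⟨t, ht⟩ := y_surj (max (lo u) (lo v)) ((hm ⟨u, rfl⟩).trans (le_max_left _ _))
      (max_le ((hle u).trans (hM ⟨u, rfl⟩)) ((hle v).trans (hM ⟨v, rfl⟩)))
    exact ⟨t, ⟨ht ▸ le_max_left _ _, ht ▸ max_le (hle u) (hadj huv.symm)⟩,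
      ht ▸ le_max_right _ _, ht ▸ max_le (hadj huv) (hle v)⟩
  · have hmono : Monotone y := fun s t hst => by simpa [y] using hst
    obtain ⟨t, ht⟩ := mem_bag v
    exact connected_induce_hasse (Set.ordConnected_Icc.preimage_mono hmono) ⟨t, ht⟩

theorem Finset.card_mul_le_card_biUnion {ι β : Type*} [DecidableEq β] {s : Finset ι}
    {f : ι → Finset β} {k : ℕ} (hs : (s : Set ι).PairwiseDisjoint f)
    (hf : ∀ i ∈ s, k ≤ (f i).card) : s.card * k ≤ (s.biUnion f).card := by
  rw [card_biUnion hs, ← smul_eq_mul]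
  exact card_nsmul_le_sum s _ k hf

theorem card_le_half_of_pairwiseDisjoint_Icc {ι : Type*} {s : Finset ι} {a b : ι → ℤ} {l : ℕ}
    (hab : ∀ i ∈ s, a i < b i) (ha : ∀ i ∈ s, 1 ≤ a i) (hb : ∀ i ∈ s, b i ≤ l)
    (hs : (s : Set ι).PairwiseDisjoint fun i => Finset.Icc (a i) (b i)) : s.card ≤ l / 2 := by
  have hsub : s.biUnion (fun i => Finset.Icc (a i) (b i)) ⊆ Finset.Icc 1 (l : ℤ) :=
    Finset.biUnion_subset.mpr fun i hi => Finset.Icc_subset_Icc (ha i hi) (hb i hi)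
  have h2 : s.card * 2 ≤ l := by
    calc s.card * 2 ≤ (s.biUnion fun i => Finset.Icc (a i) (b i)).card :=
          Finset.card_mul_le_card_biUnion hs fun i hi => by
            have := hab i hi
            rw [Int.card_Icc]; omega
      _ ≤ (Finset.Icc 1 (l : ℤ)).card := Finset.card_le_card hsub
      _ = l := by simp
  omega

theorem Set.Icc_inter_Icc_nonempty_iff_prod {α β : Type*} [Preorder α] [Preorder β]
    {p q p' q' : α × β} : (Icc p q ∩ Icc p' q').Nonempty ↔
      (Icc p.1 q.1 ∩ Icc p'.1 q'.1).Nonempty ∧ (Icc p.2 q.2 ∩ Icc p'.2 q'.2).Nonempty := by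
  rw [Icc_prod_eq, Icc_prod_eq, prod_inter_prod, prod_nonempty_iff]

theorem StrictMono.Icc_inter_Icc_nonempty_iff {α β : Type*} [LinearOrder α] [LinearOrder β]
    {f : α → β} (hf : StrictMono f) {a b a' b' : α} :
    (Set.Icc (f a) (f b) ∩ Set.Icc (f a') (f b')).Nonempty ↔
      (Set.Icc a b ∩ Set.Icc a' b').Nonempty := by
  simp only [Set.Icc_inter_Icc, Set.nonempty_Icc, ← hf.monotone.map_max, ← hf.monotone.map_min,
    hf.le_iff_le]

theorem intCast_rectangles_inter_nonempty_iff {a b c d a' b' c' d' : ℤ} :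
    (Set.Icc ((a : ℝ), (c : ℝ)) ((b : ℝ), (d : ℝ)) ∩
        Set.Icc ((a' : ℝ), (c' : ℝ)) ((b' : ℝ), (d' : ℝ))).Nonempty ↔
      (Set.Icc a b ∩ Set.Icc a' b').Nonempty ∧ (Set.Icc c d ∩ Set.Icc c' d').Nonempty := by
  rw [Set.Icc_inter_Icc_nonempty_iff_prod, Int.cast_strictMono.Icc_inter_Icc_nonempty_iff,
    Int.cast_strictMono.Icc_inter_Icc_nonempty_iff]

theorem indepLE_rectangles_crossing_line {ι : Type*} (l : ℕ) (a b c d : ι → ℤ)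
    (hab : ∀ i, a i < b i) (ha : ∀ i, 1 ≤ a i) (hb : ∀ i, b i ≤ (l : ℤ)) (y : ℤ) :
    IndepLE (intersectionGraph fun i =>
        Set.Icc (((a i : ℝ), (c i : ℝ)) : ℝ × ℝ) (((b i : ℝ), (d i : ℝ)) : ℝ × ℝ))
      {i | c i ≤ y ∧ y ≤ d i} (l / 2) := by
  rintro I ⟨hIy, hI⟩
  refine card_le_half_of_pairwiseDisjoint_Icc (fun i _ => hab i) (fun i _ => ha i)
    (fun i _ => hb i) fun i hi j hj hij => ?_
  by_contra hx
  obtain ⟨x, hxi, hxj⟩ := Finset.not_disjoint_iff.mp hx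
  refine hI i hi j hj hij ⟨hij, intCast_rectangles_inter_nonempty_iff.mpr ⟨?_, y, hIy hi, hIy hj⟩⟩
  exact ⟨x, Finset.mem_Icc.mp hxi, Finset.mem_Icc.mp hxj⟩

theorem stmt16_general {ι : Type} [Fintype ι] (l : ℕ)
    (a b c d : ι → ℤ) (hab : ∀ i, a i < b i) (hcd : ∀ i, c i < d i)
    (ha : ∀ i, 1 ≤ a i) (hb : ∀ i, b i ≤ (l : ℤ)) :
    ∃ td : TreeDecomp (intersectionGraph fun i =>
        Set.Icc (((a i : ℝ), (c i : ℝ)) : ℝ × ℝ) (((b i : ℝ), (d i : ℝ)) : ℝ × ℝ)),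
      td.IndepNumLE (l / 2) ∧
      treeAlpha (intersectionGraph fun i =>
        Set.Icc (((a i : ℝ), (c i : ℝ)) : ℝ × ℝ) (((b i : ℝ), (d i : ℝ)) : ℝ × ℝ)) ≤ l / 2 := by
  obtain ⟨td, hbag⟩ := exists_treeDecomp_of_intervals _ c d (fun i => (hcd i).le)
    fun i j (hij : (intersectionGraph _).Adj i j) => by
      obtain ⟨z, hzi, hzj⟩ := (intCast_rectangles_inter_nonempty_iff.mp hij.2).2
      exact hzi.1.trans hzj.2
  have hα : td.IndepNumLE (l / 2) := fun t => by
    obtain ⟨y, hy⟩ := hbag t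
    rw [hy]
    exact indepLE_rectangles_crossing_line l a b c d hab ha hb y
  exact ⟨td, hα, Nat.sInf_le ⟨td, hα⟩⟩

/-- the intersection graph of axis-aligned rectangles with integer corners whose
x-coordinates lie in `{1, …, ℓ}` has a tree decomposition of independence number at most
`⌊ℓ/2⌋`. -/
theorem stmt16 {ι : Type} [Fintype ι] (l : ℕ) (hl : 1 ≤ l)
    (a b c d : ι → ℤ) (hab : ∀ i, a i < b i) (hcd : ∀ i, c i < d i)
    (ha : ∀ i, 1 ≤ a i) (hb : ∀ i, b i ≤ (l : ℤ)) :
    ∃ td : TreeDecomp (intersectionGraph fun i =>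
        Set.Icc (((a i : ℝ), (c i : ℝ)) : ℝ × ℝ) (((b i : ℝ), (d i : ℝ)) : ℝ × ℝ)),
      td.IndepNumLE (l / 2) ∧
      treeAlpha (intersectionGraph fun i =>
        Set.Icc (((a i : ℝ), (c i : ℝ)) : ℝ × ℝ) (((b i : ℝ), (d i : ℝ)) : ℝ × ℝ)) ≤ l / 2 :=
  stmt16_general l a b c d hab hcd ha hb
end
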